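/- Let U ⊆ ℝ^{2n} be open, identified with an open subset of ℂ^n via complex coordinates z^m. Let I be the canonical constant complex structure (I_m{}^n = −i δ_m^n, I_{m̄}{}^{n̄} = +i δ_{m̄}^{n̄}, mixed components zero), and let J, K be smooth real (1,1)-tensor fields on U (real: J_{m̄}{}^n = conj(J_m{}^{n̄}), etc.) such that at every point I, J, K satisfy the quaternion relations IJ = −JI = K, JK = −KJ = I, KI = −IK = J, and such that each of I, J, K satisfies the Nijenhuis integrability condition ∂_{[M} T_{N]}{}^P = T_M{}^Q T_N{}^S ∂_{[Q} T_{S]}{}^P. Define the Obata connection by Γ^k_{mn} = J_n{}^{l̄} ∂_m J_{l̄}{}^k, Γ^{k̄}_{m̄n̄} = conj(Γ^k_{mn}), all other components zero. Then: (i) Γ^k_{mn} = K_n{}^{l̄} ∂_m K_{l̄}{}^k; (ii) Γ^k_{mn} = Γ^k_{nm}, i.e. the connection is torsion-free; (iii) the covariant derivatives of I, J and K with respect to Γ all vanish (∂_P T_N{}^M − Γ^Q_{PN} T_Q{}^M + Γ^M_{PQ} T_N{}^Q = 0 for T ∈ {I,J,K}); (iv) Γ is the unique torsion-free affine connection on U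 with respect to which I, J and K are all covariantly constant. -/

import Mathlib

open Complex

noncomputable section

/-- A point of `ℂ^n` (identified with `ℝ^{2n}`). -/
abbrev Pt (n : ℕ) := Fin n → ℂ

/-- A tensor index: `Sum.inl m` is the holomorphic index `m`, `Sum.inr m` the
antiholomorphic index `m̄`. -/
abbrev Idx (n : ℕ) := Fin n ⊕ Fin n

/-- The Wirtinger derivative `∂_M` in the direction of the index `M`:
`∂_m = ½(∂/∂x^m - i ∂/∂y^m)` and `∂_{m̄} = ½(∂/∂x^m + i ∂/∂y^m)`, expressed through the
real Fréchet derivative. -/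
noncomputable def wder {n : ℕ} (M : Idx n) (f : Pt n → ℂ) (z : Pt n) : ℂ :=
  match M with
  | Sum.inl m =>
      (1 / 2 : ℂ) *
        (fderiv ℝ f z (Pi.single m 1) - Complex.I * fderiv ℝ f z (Pi.single m Complex.I))
  | Sum.inr m =>
      (1 / 2 : ℂ) *
        (fderiv ℝ f z (Pi.single m 1) + Complex.I * fderiv ℝ f z (Pi.single m Complex.I))

/-- The canonical constant complex structure `I`. -/
def Ican (n : ℕ) : Idx n → Idx n → ℂ := fun M N =>
  match M, N with
  | Sum.inl m, Sum.inl k => if m = k then -Complex.I else 0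
  | Sum.inr m, Sum.inr k => if m = k then Complex.I else 0
  | _, _ => 0

/-- `I` as a (constant) tensor field. -/
def IcanT (n : ℕ) : Idx n → Idx n → Pt n → ℂ := fun M N _ => Ican n M N

/-- Pointwise product of two (1,1)-tensor fields: `(A·B)_M{}^P = A_M{}^Q B_Q{}^P`. -/
noncomputable def tmul {n : ℕ} (A B : Idx n → Idx n → Pt n → ℂ) (M P : Idx n) (x : Pt n) : ℂ :=
  ∑ Q : Idx n, A M Q x * B Q P x

/-- Covariant derivative `∇_P T_N{}^M = ∂_P T_N{}^M - Γ^Q_{PN} T_Q{}^M + Γ^M_{PQ} T_N{}^Q`. -/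
noncomputable def covd {n : ℕ} (Γ : Idx n → Idx n → Idx n → Pt n → ℂ)
    (T : Idx n → Idx n → Pt n → ℂ) (P N M : Idx n) (x : Pt n) : ℂ :=
  wder P (T N M) x - (∑ Q : Idx n, Γ Q P N x * T Q M x) + ∑ Q : Idx n, Γ M P Q x * T N Q x

/-- The Obata connection: `Γ^k_{mn} = J_n{}^{l̄} ∂_m J_{l̄}{}^k`,
`Γ^{k̄}_{m̄n̄} = conj (Γ^k_{mn})`, all other components zero. -/
noncomputable def obataC {n : ℕ} (J : Idx n → Idx n → Pt n → ℂ) :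
    Idx n → Idx n → Idx n → Pt n → ℂ := fun P M N x =>
  match P, M, N with
  | Sum.inl k, Sum.inl m, Sum.inl nn =>
      ∑ l : Fin n, J (Sum.inl nn) (Sum.inr l) x * wder (Sum.inl m) (J (Sum.inr l) (Sum.inl k)) x
  | Sum.inr k, Sum.inr m, Sum.inr nn =>
      (starRingEnd ℂ)
        (∑ l : Fin n,
          J (Sum.inl nn) (Sum.inr l) x * wder (Sum.inl m) (J (Sum.inr l) (Sum.inl k)) x)
  | _, _, _ => 0


/- ------------------------------------------------------------------ -/
/- Helper lemmas                                                       -/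
/- ------------------------------------------------------------------ -/

private lemma wder_congr {n : ℕ} {M : Idx n} {f g : Pt n → ℂ} {x : Pt n}
    (h : f =ᶠ[nhds x] g) : wder M f x = wder M g x := by
  have hd := h.fderiv_eq (𝕜 := ℝ)
  cases M <;> simp [wder, hd]

private lemma wder_const {n : ℕ} (M : Idx n) (c : ℂ) (x : Pt n) :
    wder M (fun _ => c) x = 0 := by
  cases M <;> simp [wder]

private lemma wder_mul {n : ℕ} {M : Idx n} {f g : Pt n → ℂ} {x : Pt n}
    (hf : DifferentiableAt ℝ f x) (hg : DifferentiableAt ℝ g x) :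
    wder M (fun y => f y * g y) x = wder M f x * g x + f x * wder M g x := by
  have h := fderiv_fun_mul (𝕜 := ℝ) hf hg
  cases M <;>
    simp only [wder, h, ContinuousLinearMap.add_apply, ContinuousLinearMap.smul_apply,
      smul_eq_mul] <;> ring

private lemma wder_cmul {n : ℕ} {M : Idx n} (c : ℂ) {f : Pt n → ℂ} {x : Pt n} :
    wder M (fun y => c * f y) x = c * wder M f x := by
  have h : fderiv ℝ (fun y => c * f y) x = c • fderiv ℝ f x := by
    by_cases hf : DifferentiableAt ℝ f x
    · exact fderiv_const_mul hf c
    · rcases eq_or_ne c 0 with rfl | hc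
      · simp
        ext v; simp
      · have hnd : ¬ DifferentiableAt ℝ (fun y => c * f y) x := by
          intro hcd
          have : DifferentiableAt ℝ (fun y => c⁻¹ * (c * f y)) x := hcd.const_mul _
          simp only [← mul_assoc, inv_mul_cancel₀ hc, one_mul] at this
          exact hf this
        rw [fderiv_zero_of_not_differentiableAt hf, fderiv_zero_of_not_differentiableAt hnd]
        ext v; simp
  cases M <;>
    simp only [wder, h, ContinuousLinearMap.smul_apply, smul_eq_mul] <;> ring

private lemma wder_sum {n : ℕ} {M : Idx n} {ι : Type*} (s : Finset ι) {f : ι → Pt n → ℂ}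
    {x : Pt n} (h : ∀ i ∈ s, DifferentiableAt ℝ (f i) x) :
    wder M (fun y => ∑ i ∈ s, f i y) x = ∑ i ∈ s, wder M (f i) x := by
  have h1 : fderiv ℝ (fun y => ∑ i ∈ s, f i y) x = ∑ i ∈ s, fderiv ℝ (f i) x := fderiv_fun_sum h
  cases M <;>
    simp [wder, h1, ContinuousLinearMap.sum_apply, Finset.mul_sum, Finset.sum_add_distrib,
      Finset.sum_sub_distrib, mul_add, mul_sub]

private lemma wder_conj {n : ℕ} {M : Idx n} {f : Pt n → ℂ} {x : Pt n} :
    wder (Sum.swap M) (fun y => (starRingEnd ℂ) (f y)) x = (starRingEnd ℂ) (wder M f x) := by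
  have h : fderiv ℝ (fun y => (starRingEnd ℂ) (f y)) x
      = (Complex.conjCLE : ℂ ≃L[ℝ] ℂ).toContinuousLinearMap.comp (fderiv ℝ f x) :=
    Complex.conjCLE.comp_fderiv (f := f) (x := x)
  cases M <;>
    · simp only [Sum.swap_inl, Sum.swap_inr, wder, h, ContinuousLinearMap.comp_apply,
        ContinuousLinearEquiv.coe_coe, Complex.conjCLE_apply, map_mul, map_sub, map_add,
        map_ofNat, map_one, map_div₀, Complex.conj_I]
      ring

private lemma sum_mul_sum_eq {n : ℕ} (u : Fin n → ℂ) (M : Fin n → Fin n → ℂ)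
    (v : Fin n → ℂ) :
    ∑ q, (∑ l, u l * M l q) * v q = ∑ l, u l * (∑ q, M l q * v q) := by
  simp only [Finset.sum_mul, Finset.mul_sum, mul_assoc]
  exact Finset.sum_comm

private lemma mul_sum_sum_eq {n : ℕ} (u : Fin n → ℂ) (M : Fin n → Fin n → ℂ)
    (v : Fin n → ℂ) :
    ∑ q, u q * (∑ l, M q l * v l) = ∑ l, (∑ q, u q * M q l) * v l := by
  simp only [Finset.sum_mul, Finset.mul_sum, mul_assoc]
  exact Finset.sum_comm

private lemma collapse {n : ℕ} (w : Fin n → ℂ) (m : Fin n) :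
    ∑ l, w l * -(if l = m then (1 : ℂ) else 0) = -w m := by
  simp [mul_ite, Finset.sum_ite_eq']

private lemma collapse' {n : ℕ} (w : Fin n → ℂ) (m : Fin n) :
    ∑ l, -(if m = l then (1 : ℂ) else 0) * w l = -w m := by
  simp [ite_mul, Finset.sum_ite_eq]

private lemma delta_inv {n : ℕ} {d : Fin n → ℂ} {A B : Fin n → Fin n → ℂ}
    (hAB : ∀ s q, ∑ t, A s t * B t q = -(if s = q then (1 : ℂ) else 0))
    (h0 : ∀ t, ∑ q, d q * B t q = 0) : ∀ s, d s = 0 := by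
  intro s
  have h1 : ∑ t, A s t * (∑ q, d q * B t q) = 0 :=
    Finset.sum_eq_zero fun t _ => by rw [h0 t, mul_zero]
  have h2 : ∑ t, A s t * (∑ q, d q * B t q) = ∑ q, d q * (∑ t, A s t * B t q) := by
    simp only [Finset.mul_sum]
    rw [Finset.sum_comm]
    exact Finset.sum_congr rfl fun q _ => Finset.sum_congr rfl fun t _ => by ring
  rw [h2] at h1
  have h3 : (∑ q, d q * (∑ t, A s t * B t q)) = ∑ q, d q * -(if s = q then (1 : ℂ) else 0) :=
    Finset.sum_congr rfl fun q _ => by rw [hAB s q]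
  rw [h3] at h1
  simpa using h1

/-- Theorem 2: for real smooth integrable `J`, `K` forming with the
canonical constant `I` a quaternionic triple on `U`, the connection
`Γ^k_{mn} = J_n{}^{l̄} ∂_m J_{l̄}{}^k`, `Γ^{k̄}_{m̄n̄} = conj Γ^k_{mn}` satisfies:
(i) `Γ^k_{mn} = K_n{}^{l̄} ∂_m K_{l̄}{}^k`; (ii) it is torsion-free; (iii) `I`, `J`, `K`
are covariantly constant with respect to it; (iv) it is the unique torsion-free affine
connection on `U` with this property. -/
theorem stmt6 (n : ℕ) (U : Set (Pt n)) (hU : IsOpen U)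
    (J K : Idx n → Idx n → Pt n → ℂ)
    (hJsm : ∀ M N, ContDiffOn ℝ (⊤ : ℕ∞) (J M N) U)
    (hKsm : ∀ M N, ContDiffOn ℝ (⊤ : ℕ∞) (K M N) U)
    (hJreal : ∀ (M N : Idx n), ∀ x ∈ U,
      J (Sum.swap M) (Sum.swap N) x = (starRingEnd ℂ) (J M N x))
    (hKreal : ∀ (M N : Idx n), ∀ x ∈ U,
      K (Sum.swap M) (Sum.swap N) x = (starRingEnd ℂ) (K M N x))
    (hquat : ∀ (M P : Idx n), ∀ x ∈ U,
      tmul (IcanT n) J M P x = K M P x ∧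
      tmul J (IcanT n) M P x = -K M P x ∧
      tmul J K M P x = IcanT n M P x ∧
      tmul K J M P x = -IcanT n M P x ∧
      tmul K (IcanT n) M P x = J M P x ∧
      tmul (IcanT n) K M P x = -J M P x)
    (hint : ∀ T ∈ ({IcanT n, J, K} : Set (Idx n → Idx n → Pt n → ℂ)),
      ∀ (M N P : Idx n), ∀ x ∈ U,
        wder M (T N P) x - wder N (T M P) x =
          ∑ Q : Idx n, ∑ S : Idx n,
            T M Q x * T N S x * (wder Q (T S P) x - wder S (T Q P) x)) :
    (∀ (k m nn : Fin n), ∀ x ∈ U,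
      obataC J (Sum.inl k) (Sum.inl m) (Sum.inl nn) x =
        ∑ l : Fin n,
          K (Sum.inl nn) (Sum.inr l) x * wder (Sum.inl m) (K (Sum.inr l) (Sum.inl k)) x) ∧
    (∀ (P M N : Idx n), ∀ x ∈ U, obataC J P M N x = obataC J P N M x) ∧
    (∀ T ∈ ({IcanT n, J, K} : Set (Idx n → Idx n → Pt n → ℂ)),
      ∀ (P N M : Idx n), ∀ x ∈ U, covd (obataC J) T P N M x = 0) ∧
    (∀ Γ' : Idx n → Idx n → Idx n → Pt n → ℂ,
      (∀ (P M N : Idx n), ∀ x ∈ U, Γ' P M N x = Γ' P N M x) →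
      (∀ T ∈ ({IcanT n, J, K} : Set (Idx n → Idx n → Pt n → ℂ)),
        ∀ (P N M : Idx n), ∀ x ∈ U, covd Γ' T P N M x = 0) →
      ∀ (P M N : Idx n), ∀ x ∈ U, Γ' P M N x = obataC J P M N x) := by
  classical
  have hmemI : (IcanT n) ∈ ({IcanT n, J, K} : Set (Idx n → Idx n → Pt n → ℂ)) :=
    Set.mem_insert _ _
  have hmemJ : J ∈ ({IcanT n, J, K} : Set (Idx n → Idx n → Pt n → ℂ)) :=
    Set.mem_insert_iff.mpr (Or.inr (Set.mem_insert _ _))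
  have hmemK : K ∈ ({IcanT n, J, K} : Set (Idx n → Idx n → Pt n → ℂ)) :=
    Set.mem_insert_iff.mpr (Or.inr (Set.mem_insert_iff.mpr (Or.inr rfl)))
  have hnb : ∀ x : Pt n, x ∈ U → U ∈ nhds x := fun x hx => hU.mem_nhds hx
  have hJd : ∀ (M N : Idx n) (x : Pt n), x ∈ U → DifferentiableAt ℝ (J M N) x :=
    fun M N x hx => ((hJsm M N).differentiableOn (by simp)).differentiableAt (hnb x hx)
  have hw0 : ∀ (M : Idx n) (f : Pt n → ℂ) (x : Pt n), x ∈ U → (∀ y ∈ U, f y = 0) →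
      wder M f x = 0 := by
    intro M f x hx h
    rw [wder_congr (g := fun _ => (0 : ℂ)) (Filter.eventuallyEq_of_mem (hnb x hx) h)]
    exact wder_const M 0 x
  -- pointwise consequences of the quaternion relations
  have hJ0l : ∀ (m k : Fin n) (x : Pt n), x ∈ U → J (Sum.inl m) (Sum.inl k) x = 0 := by
    intro m k x hx
    obtain ⟨h1, h2, -, -, -, -⟩ := hquat (Sum.inl m) (Sum.inl k) x hx
    simp only [tmul, IcanT, Ican, Fintype.sum_sum_type, ite_mul, mul_ite, zero_mul, mul_zero,
      Finset.sum_ite_eq, Finset.sum_ite_eq', Finset.mem_univ, if_true, Finset.sum_const_zero,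
      add_zero, zero_add] at h1 h2
    linear_combination (Complex.I / 2) * h1 + (Complex.I / 2) * h2 +
      J (Sum.inl m) (Sum.inl k) x * Complex.I_sq
  have hJ0r : ∀ (m k : Fin n) (x : Pt n), x ∈ U → J (Sum.inr m) (Sum.inr k) x = 0 := by
    intro m k x hx
    obtain ⟨h1, h2, -, -, -, -⟩ := hquat (Sum.inr m) (Sum.inr k) x hx
    simp only [tmul, IcanT, Ican, Fintype.sum_sum_type, ite_mul, mul_ite, zero_mul, mul_zero,
      Finset.sum_ite_eq, Finset.sum_ite_eq', Finset.mem_univ, if_true, Finset.sum_const_zero,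
      add_zero, zero_add] at h1 h2
    linear_combination (-Complex.I / 2) * h1 + (-Complex.I / 2) * h2 +
      J (Sum.inr m) (Sum.inr k) x * Complex.I_sq
  have hK0l : ∀ (m k : Fin n) (x : Pt n), x ∈ U → K (Sum.inl m) (Sum.inl k) x = 0 := by
    intro m k x hx
    obtain ⟨h1, h2, -, -, -, -⟩ := hquat (Sum.inl m) (Sum.inl k) x hx
    simp only [tmul, IcanT, Ican, Fintype.sum_sum_type, ite_mul, mul_ite, zero_mul, mul_zero,
      Finset.sum_ite_eq, Finset.sum_ite_eq', Finset.mem_univ, if_true, Finset.sum_const_zero,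
      add_zero, zero_add] at h1 h2
    linear_combination (-(1 : ℂ) / 2) * h1 + (1 / 2 : ℂ) * h2
  have hK0r : ∀ (m k : Fin n) (x : Pt n), x ∈ U → K (Sum.inr m) (Sum.inr k) x = 0 := by
    intro m k x hx
    obtain ⟨h1, h2, -, -, -, -⟩ := hquat (Sum.inr m) (Sum.inr k) x hx
    simp only [tmul, IcanT, Ican, Fintype.sum_sum_type, ite_mul, mul_ite, zero_mul, mul_zero,
      Finset.sum_ite_eq, Finset.sum_ite_eq', Finset.mem_univ, if_true, Finset.sum_const_zero,
      add_zero, zero_add] at h1 h2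
    linear_combination (-(1 : ℂ) / 2) * h1 + (1 / 2 : ℂ) * h2
  have hKA : ∀ (m k : Fin n) (x : Pt n), x ∈ U →
      K (Sum.inl m) (Sum.inr k) x = -Complex.I * J (Sum.inl m) (Sum.inr k) x := by
    intro m k x hx
    have h1 := (hquat (Sum.inl m) (Sum.inr k) x hx).1
    simp only [tmul, IcanT, Ican, Fintype.sum_sum_type, ite_mul, mul_ite, zero_mul, mul_zero,
      Finset.sum_ite_eq, Finset.sum_ite_eq', Finset.mem_univ, if_true, Finset.sum_const_zero,
      add_zero, zero_add] at h1
    linear_combination -h1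
  have hKB : ∀ (m k : Fin n) (x : Pt n), x ∈ U →
      K (Sum.inr m) (Sum.inl k) x = Complex.I * J (Sum.inr m) (Sum.inl k) x := by
    intro m k x hx
    have h1 := (hquat (Sum.inr m) (Sum.inl k) x hx).1
    simp only [tmul, IcanT, Ican, Fintype.sum_sum_type, ite_mul, mul_ite, zero_mul, mul_zero,
      Finset.sum_ite_eq, Finset.sum_ite_eq', Finset.mem_univ, if_true, Finset.sum_const_zero,
      add_zero, zero_add] at h1
    linear_combination -h1
  have hAB : ∀ (m p : Fin n) (x : Pt n), x ∈ U →
      ∑ q, J (Sum.inl m) (Sum.inr q) x * J (Sum.inr q) (Sum.inl p) x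
        = -(if m = p then (1 : ℂ) else 0) := by
    intro m p x hx
    have h3 := (hquat (Sum.inl m) (Sum.inl p) x hx).2.2.1
    simp only [tmul, IcanT, Ican, Fintype.sum_sum_type] at h3
    have z1 : (∑ q, J (Sum.inl m) (Sum.inl q) x * K (Sum.inl q) (Sum.inl p) x) = 0 :=
      Finset.sum_eq_zero fun q _ => by rw [hJ0l m q x hx, zero_mul]
    have z2 : (∑ q, J (Sum.inl m) (Sum.inr q) x * K (Sum.inr q) (Sum.inl p) x)
        = Complex.I * ∑ q, J (Sum.inl m) (Sum.inr q) x * J (Sum.inr q) (Sum.inl p) x := by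
      rw [Finset.mul_sum]
      exact Finset.sum_congr rfl fun q _ => by rw [hKB q p x hx]; ring
    rw [z1, z2, zero_add] at h3
    apply mul_left_cancel₀ Complex.I_ne_zero
    rw [h3]
    split <;> simp
  have hBA : ∀ (m p : Fin n) (x : Pt n), x ∈ U →
      ∑ q, J (Sum.inr m) (Sum.inl q) x * J (Sum.inl q) (Sum.inr p) x
        = -(if m = p then (1 : ℂ) else 0) := by
    intro m p x hx
    have h3 := (hquat (Sum.inr m) (Sum.inr p) x hx).2.2.1
    simp only [tmul, IcanT, Ican, Fintype.sum_sum_type] at h3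
    have z1 : (∑ q, J (Sum.inr m) (Sum.inr q) x * K (Sum.inr q) (Sum.inr p) x) = 0 :=
      Finset.sum_eq_zero fun q _ => by rw [hJ0r m q x hx, zero_mul]
    have z2 : (∑ q, J (Sum.inr m) (Sum.inl q) x * K (Sum.inl q) (Sum.inr p) x)
        = -Complex.I * ∑ q, J (Sum.inr m) (Sum.inl q) x * J (Sum.inl q) (Sum.inr p) x := by
      rw [Finset.mul_sum]
      exact Finset.sum_congr rfl fun q _ => by rw [hKA q p x hx]; ring
    rw [z1, z2, add_zero] at h3
    apply mul_left_cancel₀ (neg_ne_zero.mpr Complex.I_ne_zero)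
    rw [h3]
    split <;> simp
  -- derivative of the inverse relation hAB
  have hsumd : ∀ (M : Idx n) (m p : Fin n) (x : Pt n), x ∈ U →
      ∑ q, (wder M (J (Sum.inl m) (Sum.inr q)) x * J (Sum.inr q) (Sum.inl p) x
        + J (Sum.inl m) (Sum.inr q) x * wder M (J (Sum.inr q) (Sum.inl p)) x) = 0 := by
    intro M m p x hx
    have h0 : wder M
        (fun y => ∑ q, J (Sum.inl m) (Sum.inr q) y * J (Sum.inr q) (Sum.inl p) y) x = 0 := by
      rw [wder_congr (g := fun _ => -(if m = p then (1 : ℂ) else 0))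
        (Filter.eventuallyEq_of_mem (hnb x hx) (fun y hy => hAB m p y hy))]
      exact wder_const _ _ _
    have h1 : wder M
        (fun y => ∑ q, J (Sum.inl m) (Sum.inr q) y * J (Sum.inr q) (Sum.inl p) y) x
        = ∑ q, wder M (fun y => J (Sum.inl m) (Sum.inr q) y * J (Sum.inr q) (Sum.inl p) y) x :=
      wder_sum Finset.univ (fun q _ => (hJd _ _ x hx).mul (hJd _ _ x hx))
    calc ∑ q, (wder M (J (Sum.inl m) (Sum.inr q)) x * J (Sum.inr q) (Sum.inl p) x
          + J (Sum.inl m) (Sum.inr q) x * wder M (J (Sum.inr q) (Sum.inl p)) x)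
        = ∑ q, wder M (fun y => J (Sum.inl m) (Sum.inr q) y * J (Sum.inr q) (Sum.inl p) y) x :=
          Finset.sum_congr rfl fun q _ =>
            (wder_mul (hJd _ _ x hx) (hJd _ _ x hx)).symm
      _ = 0 := by rw [← h1, h0]
  -- conjugation of derivatives
  have hconjd : ∀ (P M N : Idx n) (x : Pt n), x ∈ U →
      wder (Sum.swap P) (J (Sum.swap M) (Sum.swap N)) x
        = (starRingEnd ℂ) (wder P (J M N) x) := by
    intro P M N x hx
    rw [wder_congr (g := fun y => (starRingEnd ℂ) (J M N y))
      (Filter.eventuallyEq_of_mem (hnb x hx) (fun y hy => hJreal M N y hy))]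
    exact wder_conj
  have hconjd1 : ∀ (p a b : Fin n) (x : Pt n), x ∈ U →
      wder (Sum.inr p) (J (Sum.inl a) (Sum.inr b)) x
        = (starRingEnd ℂ) (wder (Sum.inl p) (J (Sum.inr a) (Sum.inl b)) x) :=
    fun p a b x hx => by
      simpa using hconjd (Sum.inl p) (Sum.inr a) (Sum.inl b) x hx
  have hconjd2 : ∀ (p a b : Fin n) (x : Pt n), x ∈ U →
      wder (Sum.inr p) (J (Sum.inr a) (Sum.inl b)) x
        = (starRingEnd ℂ) (wder (Sum.inl p) (J (Sum.inl a) (Sum.inr b)) x) :=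
    fun p a b x hx => by
      simpa using hconjd (Sum.inl p) (Sum.inl a) (Sum.inr b) x hx
  -- symmetry of ∂A from integrability of J
  have hsym : ∀ (m nn p : Fin n) (x : Pt n), x ∈ U →
      wder (Sum.inl m) (J (Sum.inl nn) (Sum.inr p)) x
        = wder (Sum.inl nn) (J (Sum.inl m) (Sum.inr p)) x := by
    intro m nn p x hx
    have h := hint J hmemJ (Sum.inl m) (Sum.inl nn) (Sum.inr p) x hx
    have hz : (∑ Q : Idx n, ∑ S : Idx n, J (Sum.inl m) Q x * J (Sum.inl nn) S x *
        (wder Q (J S (Sum.inr p)) x - wder S (J Q (Sum.inr p)) x)) = 0 := by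
      rw [Fintype.sum_sum_type]
      have e1 : (∑ q : Fin n, ∑ S : Idx n, J (Sum.inl m) (Sum.inl q) x * J (Sum.inl nn) S x *
          (wder (Sum.inl q) (J S (Sum.inr p)) x - wder S (J (Sum.inl q) (Sum.inr p)) x)) = 0 :=
        Finset.sum_eq_zero fun q _ => Finset.sum_eq_zero fun S _ => by
          rw [hJ0l m q x hx]; ring
      have e2 : (∑ q : Fin n, ∑ S : Idx n, J (Sum.inl m) (Sum.inr q) x * J (Sum.inl nn) S x *
          (wder (Sum.inr q) (J S (Sum.inr p)) x - wder S (J (Sum.inr q) (Sum.inr p)) x)) = 0 := by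
        refine Finset.sum_eq_zero fun q _ => ?_
        rw [Fintype.sum_sum_type]
        have f1 : (∑ s : Fin n, J (Sum.inl m) (Sum.inr q) x * J (Sum.inl nn) (Sum.inl s) x *
            (wder (Sum.inr q) (J (Sum.inl s) (Sum.inr p)) x
              - wder (Sum.inl s) (J (Sum.inr q) (Sum.inr p)) x)) = 0 :=
          Finset.sum_eq_zero fun s _ => by rw [hJ0l nn s x hx]; ring
        have f2 : (∑ s : Fin n, J (Sum.inl m) (Sum.inr q) x * J (Sum.inl nn) (Sum.inr s) x *
            (wder (Sum.inr q) (J (Sum.inr s) (Sum.inr p)) x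
              - wder (Sum.inr s) (J (Sum.inr q) (Sum.inr p)) x)) = 0 :=
          Finset.sum_eq_zero fun s _ => by
            rw [hw0 _ _ x hx (fun y hy => hJ0r s p y hy),
              hw0 _ _ x hx (fun y hy => hJ0r q p y hy)]
            ring
        rw [f1, f2, add_zero]
      rw [e1, e2, add_zero]
    rw [hz] at h
    linear_combination h
  -- Γ in terms of derivatives of A
  have hGalt : ∀ (k m nn : Fin n) (x : Pt n), x ∈ U →
      obataC J (Sum.inl k) (Sum.inl m) (Sum.inl nn) x
        = -∑ l, wder (Sum.inl m) (J (Sum.inl nn) (Sum.inr l)) x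
            * J (Sum.inr l) (Sum.inl k) x := by
    intro k m nn x hx
    have h := hsumd (Sum.inl m) nn k x hx
    rw [Finset.sum_add_distrib] at h
    show (∑ l, J (Sum.inl nn) (Sum.inr l) x * wder (Sum.inl m) (J (Sum.inr l) (Sum.inl k)) x)
      = _
    linear_combination h
  -- component lemmas for obataC
  have hOconj : ∀ (k m nn : Fin n) (x : Pt n),
      obataC J (Sum.inr k) (Sum.inr m) (Sum.inr nn) x
        = (starRingEnd ℂ) (obataC J (Sum.inl k) (Sum.inl m) (Sum.inl nn) x) :=
    fun _ _ _ _ => rfl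
  have hOz1 : ∀ (a b c : Fin n) (x : Pt n),
      obataC J (Sum.inl a) (Sum.inl b) (Sum.inr c) x = 0 := fun _ _ _ _ => rfl
  have hOz2 : ∀ (a b c : Fin n) (x : Pt n),
      obataC J (Sum.inl a) (Sum.inr b) (Sum.inl c) x = 0 := fun _ _ _ _ => rfl
  have hOz3 : ∀ (a b c : Fin n) (x : Pt n),
      obataC J (Sum.inl a) (Sum.inr b) (Sum.inr c) x = 0 := fun _ _ _ _ => rfl
  have hOz4 : ∀ (a b c : Fin n) (x : Pt n),
      obataC J (Sum.inr a) (Sum.inl b) (Sum.inl c) x = 0 := fun _ _ _ _ => rfl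
  have hOz5 : ∀ (a b c : Fin n) (x : Pt n),
      obataC J (Sum.inr a) (Sum.inl b) (Sum.inr c) x = 0 := fun _ _ _ _ => rfl
  have hOz6 : ∀ (a b c : Fin n) (x : Pt n),
      obataC J (Sum.inr a) (Sum.inr b) (Sum.inl c) x = 0 := fun _ _ _ _ => rfl
  -- core contraction identities
  have C2 : ∀ (p nn m : Fin n) (x : Pt n), x ∈ U →
      ∑ q, obataC J (Sum.inl q) (Sum.inl p) (Sum.inl nn) x * J (Sum.inl q) (Sum.inr m) x
        = wder (Sum.inl p) (J (Sum.inl nn) (Sum.inr m)) x := by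
    intro p nn m x hx
    calc ∑ q, obataC J (Sum.inl q) (Sum.inl p) (Sum.inl nn) x * J (Sum.inl q) (Sum.inr m) x
        = ∑ q, -((∑ l, wder (Sum.inl p) (J (Sum.inl nn) (Sum.inr l)) x
              * J (Sum.inr l) (Sum.inl q) x) * J (Sum.inl q) (Sum.inr m) x) :=
          Finset.sum_congr rfl fun q _ => by rw [hGalt q p nn x hx]; ring
      _ = -∑ q, (∑ l, wder (Sum.inl p) (J (Sum.inl nn) (Sum.inr l)) x
              * J (Sum.inr l) (Sum.inl q) x) * J (Sum.inl q) (Sum.inr m) x :=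
          Finset.sum_neg_distrib _
      _ = -∑ l, wder (Sum.inl p) (J (Sum.inl nn) (Sum.inr l)) x
            * (∑ q, J (Sum.inr l) (Sum.inl q) x * J (Sum.inl q) (Sum.inr m) x) := by
          rw [sum_mul_sum_eq]
      _ = -∑ l, wder (Sum.inl p) (J (Sum.inl nn) (Sum.inr l)) x
            * -(if l = m then (1 : ℂ) else 0) := by
          rw [Finset.sum_congr rfl fun l (_ : l ∈ Finset.univ) => by rw [hBA l m x hx]]
      _ = -(-(wder (Sum.inl p) (J (Sum.inl nn) (Sum.inr m)) x)) := by rw [collapse]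
      _ = wder (Sum.inl p) (J (Sum.inl nn) (Sum.inr m)) x := neg_neg _
  have C3 : ∀ (p nn m : Fin n) (x : Pt n), x ∈ U →
      ∑ q, obataC J (Sum.inl m) (Sum.inl p) (Sum.inl q) x * J (Sum.inr nn) (Sum.inl q) x
        = -wder (Sum.inl p) (J (Sum.inr nn) (Sum.inl m)) x := by
    intro p nn m x hx
    calc ∑ q, obataC J (Sum.inl m) (Sum.inl p) (Sum.inl q) x * J (Sum.inr nn) (Sum.inl q) x
        = ∑ q, J (Sum.inr nn) (Sum.inl q) x * (∑ l, J (Sum.inl q) (Sum.inr l) x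
            * wder (Sum.inl p) (J (Sum.inr l) (Sum.inl m)) x) :=
          Finset.sum_congr rfl fun q _ => mul_comm _ _
      _ = ∑ l, (∑ q, J (Sum.inr nn) (Sum.inl q) x * J (Sum.inl q) (Sum.inr l) x)
            * wder (Sum.inl p) (J (Sum.inr l) (Sum.inl m)) x := mul_sum_sum_eq _ _ _
      _ = ∑ l, -(if nn = l then (1 : ℂ) else 0)
            * wder (Sum.inl p) (J (Sum.inr l) (Sum.inl m)) x := by
          rw [Finset.sum_congr rfl fun l (_ : l ∈ Finset.univ) => by rw [hBA nn l x hx]]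
      _ = -wder (Sum.inl p) (J (Sum.inr nn) (Sum.inl m)) x := collapse' _ _
  have C6 : ∀ (p nn m : Fin n) (x : Pt n), x ∈ U →
      ∑ q, obataC J (Sum.inr m) (Sum.inr p) (Sum.inr q) x * J (Sum.inl nn) (Sum.inr q) x
        = -wder (Sum.inr p) (J (Sum.inl nn) (Sum.inr m)) x := by
    intro p nn m x hx
    calc ∑ q, obataC J (Sum.inr m) (Sum.inr p) (Sum.inr q) x * J (Sum.inl nn) (Sum.inr q) x
        = ∑ q, (starRingEnd ℂ) (obataC J (Sum.inl m) (Sum.inl p) (Sum.inl q) x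
            * J (Sum.inr nn) (Sum.inl q) x) := by
          refine Finset.sum_congr rfl fun q _ => ?_
          rw [map_mul, hOconj]
          congr 1
          simpa using hJreal (Sum.inr nn) (Sum.inl q) x hx
      _ = (starRingEnd ℂ) (∑ q, obataC J (Sum.inl m) (Sum.inl p) (Sum.inl q) x
            * J (Sum.inr nn) (Sum.inl q) x) := (map_sum _ _ _).symm
      _ = (starRingEnd ℂ) (-wder (Sum.inl p) (J (Sum.inr nn) (Sum.inl m)) x) := by
          rw [C3 p nn m x hx]
      _ = -wder (Sum.inr p) (J (Sum.inl nn) (Sum.inr m)) x := by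
          rw [map_neg, ← hconjd1 p nn m x hx]
  have C7 : ∀ (p nn m : Fin n) (x : Pt n), x ∈ U →
      ∑ q, obataC J (Sum.inr q) (Sum.inr p) (Sum.inr nn) x * J (Sum.inr q) (Sum.inl m) x
        = wder (Sum.inr p) (J (Sum.inr nn) (Sum.inl m)) x := by
    intro p nn m x hx
    calc ∑ q, obataC J (Sum.inr q) (Sum.inr p) (Sum.inr nn) x * J (Sum.inr q) (Sum.inl m) x
        = ∑ q, (starRingEnd ℂ) (obataC J (Sum.inl q) (Sum.inl p) (Sum.inl nn) x
            * J (Sum.inl q) (Sum.inr m) x) := by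
          refine Finset.sum_congr rfl fun q _ => ?_
          rw [map_mul, hOconj]
          congr 1
          simpa using hJreal (Sum.inl q) (Sum.inr m) x hx
      _ = (starRingEnd ℂ) (∑ q, obataC J (Sum.inl q) (Sum.inl p) (Sum.inl nn) x
            * J (Sum.inl q) (Sum.inr m) x) := (map_sum _ _ _).symm
      _ = (starRingEnd ℂ) (wder (Sum.inl p) (J (Sum.inl nn) (Sum.inr m)) x) := by
          rw [C2 p nn m x hx]
      _ = wder (Sum.inr p) (J (Sum.inr nn) (Sum.inl m)) x := (hconjd2 p nn m x hx).symm
  -- derivatives of K in terms of derivatives of J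
  have hwKA : ∀ (M : Idx n) (a b : Fin n) (x : Pt n), x ∈ U →
      wder M (K (Sum.inl a) (Sum.inr b)) x
        = -Complex.I * wder M (J (Sum.inl a) (Sum.inr b)) x := by
    intro M a b x hx
    rw [wder_congr (g := fun y => -Complex.I * J (Sum.inl a) (Sum.inr b) y)
      (Filter.eventuallyEq_of_mem (hnb x hx) (fun y hy => hKA a b y hy))]
    exact wder_cmul _
  have hwKB : ∀ (M : Idx n) (a b : Fin n) (x : Pt n), x ∈ U →
      wder M (K (Sum.inr a) (Sum.inl b)) x
        = Complex.I * wder M (J (Sum.inr a) (Sum.inl b)) x := by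
    intro M a b x hx
    rw [wder_congr (g := fun y => Complex.I * J (Sum.inr a) (Sum.inl b) y)
      (Filter.eventuallyEq_of_mem (hnb x hx) (fun y hy => hKB a b y hy))]
    exact wder_cmul _
  refine ⟨?_, ?_, ?_, ?_⟩
  · -- (i) the K-form of the connection
    intro k m nn x hx
    show (∑ l, J (Sum.inl nn) (Sum.inr l) x * wder (Sum.inl m) (J (Sum.inr l) (Sum.inl k)) x)
      = _
    refine Finset.sum_congr rfl fun l _ => ?_
    rw [hKA nn l x hx, hwKB (Sum.inl m) l k x hx]
    linear_combination (J (Sum.inl nn) (Sum.inr l) x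
      * wder (Sum.inl m) (J (Sum.inr l) (Sum.inl k)) x) * Complex.I_sq
  · -- (ii) torsion-freeness
    intro P M N x hx
    have key : ∀ a b : Fin n, ∀ k : Fin n,
        obataC J (Sum.inl k) (Sum.inl a) (Sum.inl b) x
          = obataC J (Sum.inl k) (Sum.inl b) (Sum.inl a) x := by
      intro a b k
      rw [hGalt k a b x hx, hGalt k b a x hx, neg_inj]
      exact Finset.sum_congr rfl fun l _ => by rw [hsym a b l x hx]
    rcases P with k | k <;> rcases M with a | a <;> rcases N with b | b
    · exact key a b k
    · rfl
    · rfl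
    · rfl
    · rfl
    · rfl
    · rfl
    · exact congrArg (starRingEnd ℂ) (key a b k)
  · -- (iii) covariant constancy
    intro T hT
    simp only [Set.mem_insert_iff, Set.mem_singleton_iff] at hT
    rcases hT with rfl | hTJ | hTK
    · -- T = IcanT n
      intro P N M x hx
      have zc : ∀ (P N M : Idx n), wder P (IcanT n N M) x = 0 := fun P N M =>
        wder_const P (Ican n N M) x
      rcases P with p | p <;> rcases N with a | a <;> rcases M with b | b <;>
        simp only [zc, covd, IcanT, Ican, Fintype.sum_sum_type, hOz1, hOz2, hOz3, hOz4, hOz5,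
          hOz6, mul_ite, ite_mul, mul_zero, zero_mul, mul_neg, neg_mul,
          Finset.sum_ite_eq, Finset.sum_ite_eq', Finset.mem_univ, if_true,
          Finset.sum_const_zero, wder_const, add_zero, zero_add, neg_zero, sub_zero,
          zero_sub, mul_one] <;>
        ring
    · -- T = J
      rw [hTJ]
      intro P N M x hx
      rcases P with p | p <;> rcases N with a | a <;> rcases M with b | b
      · -- (l,l,l)
        have z0 : wder (Sum.inl p) (J (Sum.inl a) (Sum.inl b)) x = 0 :=
          hw0 _ _ x hx fun y hy => hJ0l a b y hy
        have z1 : (∑ q, obataC J (Sum.inl q) (Sum.inl p) (Sum.inl a) x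
            * J (Sum.inl q) (Sum.inl b) x) = 0 :=
          Finset.sum_eq_zero fun q _ => by rw [hJ0l q b x hx, mul_zero]
        have z2 : (∑ q, obataC J (Sum.inl b) (Sum.inl p) (Sum.inl q) x
            * J (Sum.inl a) (Sum.inl q) x) = 0 :=
          Finset.sum_eq_zero fun q _ => by rw [hJ0l a q x hx, mul_zero]
        simp only [covd, Fintype.sum_sum_type, hOz1, hOz4, zero_mul, mul_zero,
          Finset.sum_const_zero, add_zero, zero_add, z0, z1, z2]
        ring
      · -- (l,l,r)
        simp only [covd, Fintype.sum_sum_type, hOz4, hOz5, zero_mul, Finset.sum_const_zero,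
          add_zero, zero_add, C2 p a b x hx]
        ring
      · -- (l,r,l)
        simp only [covd, Fintype.sum_sum_type, hOz1, hOz5, zero_mul, Finset.sum_const_zero,
          add_zero, zero_add, C3 p a b x hx]
        ring
      · -- (l,r,r)
        have z0 : wder (Sum.inl p) (J (Sum.inr a) (Sum.inr b)) x = 0 :=
          hw0 _ _ x hx fun y hy => hJ0r a b y hy
        simp only [covd, Fintype.sum_sum_type, hOz1, hOz4, hOz5, zero_mul,
          Finset.sum_const_zero, add_zero, zero_add, z0]
        ring
      · -- (r,l,l)
        have z0 : wder (Sum.inr p) (J (Sum.inl a) (Sum.inl b)) x = 0 :=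
          hw0 _ _ x hx fun y hy => hJ0l a b y hy
        simp only [covd, Fintype.sum_sum_type, hOz2, hOz3, hOz6, zero_mul,
          Finset.sum_const_zero, add_zero, zero_add, z0]
        ring
      · -- (r,l,r)
        simp only [covd, Fintype.sum_sum_type, hOz2, hOz6, zero_mul, Finset.sum_const_zero,
          add_zero, zero_add, C6 p a b x hx]
        ring
      · -- (r,r,l)
        simp only [covd, Fintype.sum_sum_type, hOz2, hOz3, zero_mul, Finset.sum_const_zero,
          add_zero, zero_add, C7 p a b x hx]
        ring
      · -- (r,r,r)
        have z0 : wder (Sum.inr p) (J (Sum.inr a) (Sum.inr b)) x = 0 :=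
          hw0 _ _ x hx fun y hy => hJ0r a b y hy
        have z1 : (∑ q, obataC J (Sum.inr q) (Sum.inr p) (Sum.inr a) x
            * J (Sum.inr q) (Sum.inr b) x) = 0 :=
          Finset.sum_eq_zero fun q _ => by rw [hJ0r q b x hx, mul_zero]
        have z2 : (∑ q, obataC J (Sum.inr b) (Sum.inr p) (Sum.inr q) x
            * J (Sum.inr a) (Sum.inr q) x) = 0 :=
          Finset.sum_eq_zero fun q _ => by rw [hJ0r a q x hx, mul_zero]
        simp only [covd, Fintype.sum_sum_type, hOz3, hOz6, zero_mul, mul_zero,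
          Finset.sum_const_zero, add_zero, zero_add, z0, z1, z2]
        ring
    · -- T = K
      rw [hTK]
      intro P N M x hx
      rcases P with p | p <;> rcases N with a | a <;> rcases M with b | b
      · -- (l,l,l)
        have z0 : wder (Sum.inl p) (K (Sum.inl a) (Sum.inl b)) x = 0 :=
          hw0 _ _ x hx fun y hy => hK0l a b y hy
        have z1 : (∑ q, obataC J (Sum.inl q) (Sum.inl p) (Sum.inl a) x
            * K (Sum.inl q) (Sum.inl b) x) = 0 :=
          Finset.sum_eq_zero fun q _ => by rw [hK0l q b x hx, mul_zero]
        have z2 : (∑ q, obataC J (Sum.inl b) (Sum.inl p) (Sum.inl q) x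
            * K (Sum.inl a) (Sum.inl q) x) = 0 :=
          Finset.sum_eq_zero fun q _ => by rw [hK0l a q x hx, mul_zero]
        simp only [covd, Fintype.sum_sum_type, hOz1, hOz4, zero_mul, mul_zero,
          Finset.sum_const_zero, add_zero, zero_add, z0, z1, z2]
        ring
      · -- (l,l,r)
        have z1 : (∑ q, obataC J (Sum.inl q) (Sum.inl p) (Sum.inl a) x
            * K (Sum.inl q) (Sum.inr b) x)
            = -Complex.I * wder (Sum.inl p) (J (Sum.inl a) (Sum.inr b)) x := by
          rw [← C2 p a b x hx, Finset.mul_sum]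
          exact Finset.sum_congr rfl fun q _ => by rw [hKA q b x hx]; ring
        simp only [covd, Fintype.sum_sum_type, hOz4, hOz5, zero_mul, Finset.sum_const_zero,
          add_zero, zero_add, z1, hwKA (Sum.inl p) a b x hx]
        ring
      · -- (l,r,l)
        have z1 : (∑ q, obataC J (Sum.inl b) (Sum.inl p) (Sum.inl q) x
            * K (Sum.inr a) (Sum.inl q) x)
            = Complex.I * -wder (Sum.inl p) (J (Sum.inr a) (Sum.inl b)) x := by
          rw [← C3 p a b x hx, Finset.mul_sum]
          exact Finset.sum_congr rfl fun q _ => by rw [hKB a q x hx]; ring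
        simp only [covd, Fintype.sum_sum_type, hOz1, hOz5, zero_mul, Finset.sum_const_zero,
          add_zero, zero_add, z1, hwKB (Sum.inl p) a b x hx]
        ring
      · -- (l,r,r)
        have z0 : wder (Sum.inl p) (K (Sum.inr a) (Sum.inr b)) x = 0 :=
          hw0 _ _ x hx fun y hy => hK0r a b y hy
        simp only [covd, Fintype.sum_sum_type, hOz1, hOz4, hOz5, zero_mul,
          Finset.sum_const_zero, add_zero, zero_add, z0]
        ring
      · -- (r,l,l)
        have z0 : wder (Sum.inr p) (K (Sum.inl a) (Sum.inl b)) x = 0 :=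
          hw0 _ _ x hx fun y hy => hK0l a b y hy
        simp only [covd, Fintype.sum_sum_type, hOz2, hOz3, hOz6, zero_mul,
          Finset.sum_const_zero, add_zero, zero_add, z0]
        ring
      · -- (r,l,r)
        have z1 : (∑ q, obataC J (Sum.inr b) (Sum.inr p) (Sum.inr q) x
            * K (Sum.inl a) (Sum.inr q) x)
            = -Complex.I * -wder (Sum.inr p) (J (Sum.inl a) (Sum.inr b)) x := by
          rw [← C6 p a b x hx, Finset.mul_sum]
          exact Finset.sum_congr rfl fun q _ => by rw [hKA a q x hx]; ring
        simp only [covd, Fintype.sum_sum_type, hOz2, hOz6, zero_mul, Finset.sum_const_zero,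
          add_zero, zero_add, z1, hwKA (Sum.inr p) a b x hx]
        ring
      · -- (r,r,l)
        have z1 : (∑ q, obataC J (Sum.inr q) (Sum.inr p) (Sum.inr a) x
            * K (Sum.inr q) (Sum.inl b) x)
            = Complex.I * wder (Sum.inr p) (J (Sum.inr a) (Sum.inl b)) x := by
          rw [← C7 p a b x hx, Finset.mul_sum]
          exact Finset.sum_congr rfl fun q _ => by rw [hKB q b x hx]; ring
        simp only [covd, Fintype.sum_sum_type, hOz2, hOz3, zero_mul, Finset.sum_const_zero,
          add_zero, zero_add, z1, hwKB (Sum.inr p) a b x hx]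
        ring
      · -- (r,r,r)
        have z0 : wder (Sum.inr p) (K (Sum.inr a) (Sum.inr b)) x = 0 :=
          hw0 _ _ x hx fun y hy => hK0r a b y hy
        have z1 : (∑ q, obataC J (Sum.inr q) (Sum.inr p) (Sum.inr a) x
            * K (Sum.inr q) (Sum.inr b) x) = 0 :=
          Finset.sum_eq_zero fun q _ => by rw [hK0r q b x hx, mul_zero]
        have z2 : (∑ q, obataC J (Sum.inr b) (Sum.inr p) (Sum.inr q) x
            * K (Sum.inr a) (Sum.inr q) x) = 0 :=
          Finset.sum_eq_zero fun q _ => by rw [hK0r a q x hx, mul_zero]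
        simp only [covd, Fintype.sum_sum_type, hOz3, hOz6, zero_mul, mul_zero,
          Finset.sum_const_zero, add_zero, zero_add, z0, z1, z2]
        ring
  · -- (iv) uniqueness
    intro Γ' hΓsym hΓcov
    have hz1 : ∀ (a : Fin n) (P : Idx n) (c : Fin n) (x : Pt n), x ∈ U →
        Γ' (Sum.inl a) P (Sum.inr c) x = 0 := by
      intro a P c x hx
      have h := hΓcov (IcanT n) hmemI P (Sum.inr c) (Sum.inl a) x hx
      have zc : ∀ (P N M : Idx n), wder P (IcanT n N M) x = 0 := fun P N M =>
        wder_const P (Ican n N M) x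
      simp only [zc, covd, IcanT, Ican, Fintype.sum_sum_type, mul_ite, ite_mul, mul_zero,
        zero_mul, mul_neg, neg_mul, Finset.sum_ite_eq, Finset.sum_ite_eq', Finset.mem_univ,
        if_true, Finset.sum_const_zero, wder_const, add_zero, zero_add, neg_zero, sub_zero,
        zero_sub, mul_one] at h
      linear_combination (-Complex.I / 2) * h
        + Γ' (Sum.inl a) P (Sum.inr c) x * Complex.I_sq
    have hz2 : ∀ (a : Fin n) (P : Idx n) (c : Fin n) (x : Pt n), x ∈ U →
        Γ' (Sum.inr a) P (Sum.inl c) x = 0 := by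
      intro a P c x hx
      have h := hΓcov (IcanT n) hmemI P (Sum.inl c) (Sum.inr a) x hx
      have zc : ∀ (P N M : Idx n), wder P (IcanT n N M) x = 0 := fun P N M =>
        wder_const P (Ican n N M) x
      simp only [zc, covd, IcanT, Ican, Fintype.sum_sum_type, mul_ite, ite_mul, mul_zero,
        zero_mul, mul_neg, neg_mul, Finset.sum_ite_eq, Finset.sum_ite_eq', Finset.mem_univ,
        if_true, Finset.sum_const_zero, wder_const, add_zero, zero_add, neg_zero, sub_zero,
        zero_sub, mul_one] at h
      linear_combination (Complex.I / 2) * h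
        + Γ' (Sum.inr a) P (Sum.inl c) x * Complex.I_sq
    have hB : ∀ (m p s : Fin n) (x : Pt n), x ∈ U →
        Γ' (Sum.inl m) (Sum.inl p) (Sum.inl s) x
          = obataC J (Sum.inl m) (Sum.inl p) (Sum.inl s) x := by
      intro m p s x hx
      have hrel : ∀ nn : Fin n,
          ∑ q, (Γ' (Sum.inl m) (Sum.inl p) (Sum.inl q) x
            - obataC J (Sum.inl m) (Sum.inl p) (Sum.inl q) x)
              * J (Sum.inr nn) (Sum.inl q) x = 0 := by
        intro nn
        have h := hΓcov J hmemJ (Sum.inl p) (Sum.inr nn) (Sum.inl m) x hx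
        have z1 : (∑ q, Γ' (Sum.inl q) (Sum.inl p) (Sum.inr nn) x
            * J (Sum.inl q) (Sum.inl m) x) = 0 :=
          Finset.sum_eq_zero fun q _ => by rw [hz1 q (Sum.inl p) nn x hx, zero_mul]
        have z2 : (∑ q, Γ' (Sum.inr q) (Sum.inl p) (Sum.inr nn) x
            * J (Sum.inr q) (Sum.inl m) x) = 0 :=
          Finset.sum_eq_zero fun q _ => by
            rw [hΓsym (Sum.inr q) (Sum.inl p) (Sum.inr nn) x hx,
              hz2 q (Sum.inr nn) p x hx, zero_mul]
        have z3 : (∑ q, Γ' (Sum.inl m) (Sum.inl p) (Sum.inr q) x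
            * J (Sum.inr nn) (Sum.inr q) x) = 0 :=
          Finset.sum_eq_zero fun q _ => by rw [hz1 m (Sum.inl p) q x hx, zero_mul]
        simp only [covd, Fintype.sum_sum_type, z1, z2, z3, add_zero, zero_add,
          sub_zero] at h
        have hC := C3 p nn m x hx
        simp only [sub_mul, Finset.sum_sub_distrib]
        linear_combination h - hC
      have hd := delta_inv
        (d := fun q => Γ' (Sum.inl m) (Sum.inl p) (Sum.inl q) x
          - obataC J (Sum.inl m) (Sum.inl p) (Sum.inl q) x)
        (A := fun s t => J (Sum.inl s) (Sum.inr t) x)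
        (B := fun t q => J (Sum.inr t) (Sum.inl q) x)
        (fun s q => hAB s q x hx) (fun t => hrel t) s
      linear_combination hd
    have hC' : ∀ (m p s : Fin n) (x : Pt n), x ∈ U →
        Γ' (Sum.inr m) (Sum.inr p) (Sum.inr s) x
          = obataC J (Sum.inr m) (Sum.inr p) (Sum.inr s) x := by
      intro m p s x hx
      have hrel : ∀ nn : Fin n,
          ∑ q, (Γ' (Sum.inr m) (Sum.inr p) (Sum.inr q) x
            - obataC J (Sum.inr m) (Sum.inr p) (Sum.inr q) x)
              * J (Sum.inl nn) (Sum.inr q) x = 0 := by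
        intro nn
        have h := hΓcov J hmemJ (Sum.inr p) (Sum.inl nn) (Sum.inr m) x hx
        have z1 : (∑ q, Γ' (Sum.inl q) (Sum.inr p) (Sum.inl nn) x
            * J (Sum.inl q) (Sum.inr m) x) = 0 :=
          Finset.sum_eq_zero fun q _ => by
            rw [hΓsym (Sum.inl q) (Sum.inr p) (Sum.inl nn) x hx,
              hz1 q (Sum.inl nn) p x hx, zero_mul]
        have z2 : (∑ q, Γ' (Sum.inr q) (Sum.inr p) (Sum.inl nn) x
            * J (Sum.inr q) (Sum.inr m) x) = 0 :=
          Finset.sum_eq_zero fun q _ => by rw [hz2 q (Sum.inr p) nn x hx, zero_mul]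
        have z3 : (∑ q, Γ' (Sum.inr m) (Sum.inr p) (Sum.inl q) x
            * J (Sum.inl nn) (Sum.inl q) x) = 0 :=
          Finset.sum_eq_zero fun q _ => by rw [hz2 m (Sum.inr p) q x hx, zero_mul]
        simp only [covd, Fintype.sum_sum_type, z1, z2, z3, add_zero, zero_add,
          sub_zero] at h
        have hC := C6 p nn m x hx
        simp only [sub_mul, Finset.sum_sub_distrib]
        linear_combination h - hC
      have hd := delta_inv
        (d := fun q => Γ' (Sum.inr m) (Sum.inr p) (Sum.inr q) x
          - obataC J (Sum.inr m) (Sum.inr p) (Sum.inr q) x)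
        (A := fun s t => J (Sum.inr s) (Sum.inl t) x)
        (B := fun t q => J (Sum.inl t) (Sum.inr q) x)
        (fun s q => hBA s q x hx) (fun t => hrel t) s
      linear_combination hd
    intro P M N x hx
    rcases P with a | a <;> rcases M with b | b <;> rcases N with c | c
    · exact hB a b c x hx
    · rw [hz1 a (Sum.inl b) c x hx, hOz1]
    · rw [hΓsym (Sum.inl a) (Sum.inr b) (Sum.inl c) x hx, hz1 a (Sum.inl c) b x hx, hOz2]
    · rw [hz1 a (Sum.inr b) c x hx, hOz3]
    · rw [hz2 a (Sum.inl b) c x hx, hOz4]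
    · rw [hΓsym (Sum.inr a) (Sum.inl b) (Sum.inr c) x hx, hz2 a (Sum.inr c) b x hx, hOz5]
    · rw [hz2 a (Sum.inr b) c x hx, hOz6]
    · exact hC' a b c x hx
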